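/- Every additively homogeneous closed subset of 2^ω is VL-homogeneous. Concretely: if P is a-homogeneous with constant c, then for all n, all k ≥ n, and all σ ∈ T_P↾n, (2^{-4c})·#(T_P↾k)/#(T_P↾n) ≤ #(T_{P∩[σ]}↾k) ≤ (2^{4c})·#(T_P↾k)/#(T_P↾n). -/

import Mathlib

open MeasureTheory Filter

noncomputable section

/-- The cylinder (basic clopen set) determined by a finite binary string. -/
def cyl (σ : List Bool) : Set (ℕ → Bool) :=
  {X | ∀ i, i < σ.length → X i = σ.getD i false}

/-- σ is an extendible node of P, i.e. σ ∈ T_P. -/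
def extn (P : Set (ℕ → Bool)) (σ : List Bool) : Prop :=
  (cyl σ ∩ P).Nonempty

/-- The level-n strings of the tree of extendible nodes, T_P ↾ n. -/
def level (P : Set (ℕ → Bool)) (n : ℕ) : Set (List Bool) :=
  {σ | σ.length = n ∧ extn P σ}

/-- #(T_P ↾ n). -/
def levelCard (P : Set (ℕ → Bool)) (n : ℕ) : ℕ :=
  (level P n).ncard

/-- The clopen set [T_P ↾ n] generated by the level-n extendible nodes. -/
def levelUnion (P : Set (ℕ → Bool)) (n : ℕ) : Set (ℕ → Bool) :=
  ⋃ σ ∈ level P n, cyl σ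

/-- The prefix of σ of length m+1 with its last bit flipped, i.e. (σ↾(m+1))^↷. -/
def flipAt (σ : List Bool) (m : ℕ) : List Bool :=
  σ.take m ++ [!σ.getD m false]

/-- θ_P(σ): the number of initial segments of σ whose last-bit-flipped sibling is in T_P. -/
def theta (P : Set (ℕ → Bool)) (σ : List Bool) : ℕ :=
  {m | m < σ.length ∧ extn P (flipAt σ m)}.ncard

/-- The number of extensions of σ in T_P ↾ n. -/
def extCard (P : Set (ℕ → Bool)) (σ : List Bool) (n : ℕ) : ℕ :=
  {τ | τ.length = n ∧ extn P τ ∧ σ <+: τ}.ncard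

/-- X ↾ n as a finite string. -/
def prefixList (X : ℕ → Bool) (n : ℕ) : List Bool :=
  List.ofFn (fun i : Fin n => X i)

/-- Interleaving X ⊕ Y of two infinite sequences. -/
def seqInterleave (X Y : ℕ → Bool) : ℕ → Bool :=
  fun n => if n % 2 = 0 then X (n / 2) else Y (n / 2)

/-- Interleaving σ ⊕ τ of two finite strings (of equal length). -/
def interleave : List Bool → List Bool → List Bool
  | a :: σ, b :: τ => a :: b :: interleave σ τ
  | _, _ => []

/-- The product P₀ ⊗ P₁ = {X ⊕ Y : X ∈ P₀, Y ∈ P₁}. -/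
def prodClass (P₀ P₁ : Set (ℕ → Bool)) : Set (ℕ → Bool) :=
  {Z | ∃ X ∈ P₀, ∃ Y ∈ P₁, Z = seqInterleave X Y}


/-!
Give each node `τ ∈ T_P` the mass `2^{-θ_P(τ)}`. A node splits its mass evenly between two
extendible children and passes it whole to a single one, so the masses of the extensions of `σ`
at any level `k ≥ |σ|` add up to `2^{-θ_P(σ)}`. Under a-homogeneity all masses at level `k` agree
up to a factor `2^c`, so `#(T_{P∩[σ]}↾k)` equals `2^{θ_P(ρ)-θ_P(σ)}` up to a factor `2^c`, for any
`ρ ∈ T_P↾k`. Comparing these estimates for `σ`, for `[]` at level `k` and for `[]` at level `n`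
gives both bounds, even with `2^{3c}` in place of `2^{4c}`.
-/

section

variable {P : Set (ℕ → Bool)}

lemma cyl_subset_of_prefix {σ τ : List Bool} (h : σ <+: τ) : cyl τ ⊆ cyl σ := by
  intro X hX i hi
  obtain ⟨t, rfl⟩ := h
  rw [hX i (by simp; omega), List.getD_append _ _ _ _ hi]

lemma prefix_of_mem_cyl {σ τ : List Bool} (h : σ.length ≤ τ.length) {X : ℕ → Bool}
    (hσ : X ∈ cyl σ) (hτ : X ∈ cyl τ) : σ <+: τ := by
  rw [List.prefix_iff_eq_take]
  refine List.ext_getElem (by simp; omega) fun i hi _ => ?_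
  rw [List.getElem_take, ← List.getD_eq_getElem σ false hi,
    ← List.getD_eq_getElem τ false (by omega), ← hσ i hi, ← hτ i (by omega)]

lemma extn_of_prefix {σ τ : List Bool} (h : σ <+: τ) (hτ : extn P τ) : extn P σ :=
  let ⟨X, hXτ, hXP⟩ := hτ
  ⟨X, cyl_subset_of_prefix h hXτ, hXP⟩

lemma exists_extn_concat {τ : List Bool} (h : extn P τ) : ∃ b, extn P (τ ++ [b]) := by
  obtain ⟨X, hXτ, hXP⟩ := h
  refine ⟨X τ.length, X, fun i hi => ?_, hXP⟩
  rcases lt_or_ge i τ.length with hlt | hge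
  · rw [List.getD_append _ _ _ _ hlt, hXτ i hlt]
  · rw [List.length_append, List.length_singleton] at hi
    obtain rfl : i = τ.length := by omega
    simp

lemma extn_inter_cyl_iff {σ τ : List Bool} (h : σ.length ≤ τ.length) :
    extn (P ∩ cyl σ) τ ↔ extn P τ ∧ σ <+: τ := by
  constructor
  · rintro ⟨X, hXτ, hXP, hXσ⟩
    exact ⟨⟨X, hXτ, hXP⟩, prefix_of_mem_cyl h hXσ hXτ⟩
  · rintro ⟨⟨X, hXτ, hXP⟩, hpre⟩
    exact ⟨X, hXτ, hXP, cyl_subset_of_prefix hpre hXτ⟩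

lemma levelCard_inter_cyl {σ : List Bool} {k : ℕ} (hk : σ.length ≤ k) :
    levelCard (P ∩ cyl σ) k = extCard P σ k := by
  rw [levelCard, extCard, level]
  congr 1
  ext τ
  constructor
  · rintro ⟨rfl, he⟩
    exact ⟨rfl, extn_inter_cyl_iff hk |>.mp he⟩
  · rintro ⟨rfl, he⟩
    exact ⟨rfl, extn_inter_cyl_iff hk |>.mpr he⟩

lemma levelCard_eq_extCard_nil (k : ℕ) : levelCard P k = extCard P [] k := by
  have : P ∩ cyl [] = P := Set.inter_eq_left.mpr fun X _ i hi => absurd hi (by simp)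
  rw [← levelCard_inter_cyl (Nat.zero_le k), this]

lemma flipAt_concat_of_lt (τ : List Bool) (b : Bool) {m : ℕ} (hm : m < τ.length) :
    flipAt (τ ++ [b]) m = flipAt τ m := by
  rw [flipAt, flipAt, List.take_append_of_le_length hm.le, List.getD_append _ _ _ _ hm]

lemma flipAt_concat_length (τ : List Bool) (b : Bool) :
    flipAt (τ ++ [b]) τ.length = τ ++ [!b] := by
  simp [flipAt]

open Classical in
lemma theta_eq_card_filter (σ : List Bool) :
    theta P σ = ((Finset.range σ.length).filter fun m => extn P (flipAt σ m)).card := by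
  rw [theta, ← Set.ncard_coe_finset]
  simp

@[simp]
lemma theta_nil : theta P [] = 0 := by
  simp [theta_eq_card_filter]

open Classical in
lemma theta_concat (τ : List Bool) (b : Bool) :
    theta P (τ ++ [b]) = theta P τ + if extn P (τ ++ [!b]) then 1 else 0 := by
  rw [theta_eq_card_filter, theta_eq_card_filter, List.length_append, List.length_singleton,
    Finset.range_add_one, Finset.filter_insert, flipAt_concat_length,
    Finset.filter_congr fun m hm => by rw [flipAt_concat_of_lt τ b (Finset.mem_range.mp hm)]]
  split_ifs <;> simp [Finset.card_insert_of_notMem]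

lemma finite_extensions (P : Set (ℕ → Bool)) (σ : List Bool) (k : ℕ) :
    {τ : List Bool | τ.length = k ∧ extn P τ ∧ σ <+: τ}.Finite :=
  (List.finite_length_eq Bool k).subset fun _ hτ => hτ.1

def extFinset (P : Set (ℕ → Bool)) (σ : List Bool) (k : ℕ) : Finset (List Bool) :=
  (finite_extensions P σ k).toFinset

lemma mem_extFinset {σ τ : List Bool} {k : ℕ} :
    τ ∈ extFinset P σ k ↔ τ.length = k ∧ extn P τ ∧ σ <+: τ := by
  simp [extFinset]

lemma card_extFinset (σ : List Bool) (k : ℕ) : (extFinset P σ k).card = extCard P σ k :=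
  (Set.ncard_eq_toFinset_card _ (finite_extensions P σ k)).symm

open Classical in
lemma sum_children_inv_two_pow_theta {τ : List Bool} (h : extn P τ) :
    ∑ τ' ∈ ({τ ++ [false], τ ++ [true]} : Finset (List Bool)).filter (extn P),
      ((2 : ℝ) ^ theta P τ')⁻¹ = ((2 : ℝ) ^ theta P τ)⁻¹ := by
  have hne : τ ++ [false] ≠ τ ++ [true] := by simp
  by_cases hf : extn P (τ ++ [false]) <;> by_cases ht : extn P (τ ++ [true])
  · simp [Finset.filter_insert, Finset.filter_singleton, hf, ht, hne, theta_concat, pow_succ]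
    ring
  · simp [Finset.filter_insert, Finset.filter_singleton, hf, ht, theta_concat]
  · simp [Finset.filter_insert, Finset.filter_singleton, hf, ht, theta_concat]
  · obtain ⟨b, hb⟩ := exists_extn_concat h
    cases b <;> contradiction

lemma dropLast_mem_extFinset {σ τ : List Bool} {k : ℕ} (hk : σ.length ≤ k)
    (hτ : τ ∈ extFinset P σ (k + 1)) : τ.dropLast ∈ extFinset P σ k := by
  obtain ⟨hlen, hext, hpre⟩ := mem_extFinset.mp hτ
  refine mem_extFinset.mpr ⟨by simp [hlen], extn_of_prefix (List.dropLast_prefix τ) hext, ?_⟩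
  rw [List.dropLast_eq_take, hlen, Nat.add_sub_cancel]
  exact List.prefix_take_iff.mpr ⟨hpre, hk⟩

open Classical in
lemma filter_extFinset_succ_dropLast_eq {σ τ : List Bool} {k : ℕ}
    (hτ : τ ∈ extFinset P σ k) :
    (extFinset P σ (k + 1)).filter (·.dropLast = τ) =
      ({τ ++ [false], τ ++ [true]} : Finset (List Bool)).filter (extn P) := by
  obtain ⟨hlen, -, hpre⟩ := mem_extFinset.mp hτ
  ext τ'
  simp only [Finset.mem_filter, mem_extFinset, Finset.mem_insert, Finset.mem_singleton]
  constructor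
  · rintro ⟨⟨hl, he, -⟩, rfl⟩
    have hne : τ' ≠ [] := by rintro rfl; simp at hl
    refine ⟨?_, he⟩
    have := (List.dropLast_append_getLast hne).symm
    cases hb : τ'.getLast hne <;> rw [hb] at this
    exacts [Or.inl this, Or.inr this]
  · rintro ⟨rfl | rfl, he⟩ <;>
      exact ⟨⟨by simp [hlen], he, hpre.trans (by simp)⟩, List.dropLast_concat⟩

theorem sum_extFinset_inv_two_pow_theta {σ : List Bool} (hσ : extn P σ) {k : ℕ}
    (hk : σ.length ≤ k) :
    ∑ τ ∈ extFinset P σ k, ((2 : ℝ) ^ theta P τ)⁻¹ = ((2 : ℝ) ^ theta P σ)⁻¹ := by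
  induction k, hk using Nat.le_induction with
  | base =>
    have : extFinset P σ σ.length = {σ} := by
      ext τ
      simp only [mem_extFinset, Finset.mem_singleton]
      constructor
      · rintro ⟨hl, -, hp⟩
        exact (hp.eq_of_length hl.symm).symm
      · rintro rfl
        exact ⟨rfl, hσ, List.prefix_rfl⟩
    rw [this, Finset.sum_singleton]
  | succ k hk ih =>
    rw [← Finset.sum_fiberwise_of_maps_to fun _ => dropLast_mem_extFinset hk, ← ih]
    refine Finset.sum_congr rfl fun τ hτ => ?_
    rw [filter_extFinset_succ_dropLast_eq hτ,
      sum_children_inv_two_pow_theta (mem_extFinset.mp hτ).2.1]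

lemma extFinset_nonempty {σ : List Bool} (hσ : extn P σ) {k : ℕ} (hk : σ.length ≤ k) :
    (extFinset P σ k).Nonempty :=
  Finset.nonempty_of_sum_ne_zero <| by
    rw [sum_extFinset_inv_two_pow_theta hσ hk]
    positivity

lemma extCard_mul_two_pow_theta_le {σ : List Bool} (hσ : extn P σ) {k : ℕ} (hk : σ.length ≤ k)
    {R c : ℕ} (hR : ∀ ρ ∈ extFinset P σ k, theta P ρ ≤ R + c) :
    extCard P σ k * 2 ^ theta P σ ≤ 2 ^ c * 2 ^ R := by
  have hsum : (extCard P σ k : ℝ) * ((2 : ℝ) ^ (R + c))⁻¹ ≤ ((2 : ℝ) ^ theta P σ)⁻¹ := by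
    rw [← sum_extFinset_inv_two_pow_theta hσ hk, ← card_extFinset, ← nsmul_eq_mul,
      ← Finset.sum_const]
    exact Finset.sum_le_sum fun ρ hρ =>
      inv_anti₀ (by positivity) (pow_le_pow_right₀ one_le_two (hR ρ hρ))
  field_simp at hsum
  rw [← pow_add, add_comm c]
  exact_mod_cast hsum

lemma two_pow_le_extCard_mul {σ : List Bool} (hσ : extn P σ) {k : ℕ} (hk : σ.length ≤ k)
    {R c : ℕ} (hR : ∀ ρ ∈ extFinset P σ k, R ≤ theta P ρ + c) :
    2 ^ R ≤ 2 ^ c * (extCard P σ k * 2 ^ theta P σ) := by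
  have hsum : ((2 : ℝ) ^ theta P σ)⁻¹ ≤ extCard P σ k * (2 ^ c * ((2 : ℝ) ^ R)⁻¹) := by
    rw [← sum_extFinset_inv_two_pow_theta hσ hk, ← card_extFinset, ← nsmul_eq_mul,
      ← Finset.sum_const]
    refine Finset.sum_le_sum fun ρ hρ => ?_
    rw [← div_eq_mul_inv, le_div_iff₀ (by positivity), ← div_eq_inv_mul,
      div_le_iff₀ (by positivity), ← pow_add, add_comm c]
    exact pow_le_pow_right₀ one_le_two (hR ρ hρ)
  field_simp at hsum
  exact_mod_cast (hsum.trans_eq (by ring) :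
    (2 : ℝ) ^ R ≤ 2 ^ c * (extCard P σ k * 2 ^ theta P σ))

def AHomogeneous (P : Set (ℕ → Bool)) (c : ℕ) : Prop :=
  ∀ σ τ : List Bool, extn P σ → extn P τ → σ.length = τ.length →
    |(theta P σ : ℤ) - (theta P τ : ℤ)| ≤ c

lemma AHomogeneous.extCard_mul_two_pow_theta_bounds {c : ℕ} (hP : AHomogeneous P c)
    {σ ρ₀ : List Bool} (hσ : extn P σ) {k : ℕ} (hk : σ.length ≤ k) (hρ₀ : extn P ρ₀)
    (hρ₀k : ρ₀.length = k) :
    extCard P σ k * 2 ^ theta P σ ≤ 2 ^ c * 2 ^ theta P ρ₀ ∧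
      2 ^ theta P ρ₀ ≤ 2 ^ c * (extCard P σ k * 2 ^ theta P σ) := by
  have near : ∀ ρ ∈ extFinset P σ k,
      theta P ρ ≤ theta P ρ₀ + c ∧ theta P ρ₀ ≤ theta P ρ + c := by
    intro ρ hρ
    obtain ⟨hρk, hρ, -⟩ := mem_extFinset.mp hρ
    have := hP ρ ρ₀ hρ hρ₀ (hρk.trans hρ₀k.symm)
    rw [abs_sub_le_iff] at this
    omega
  exact ⟨extCard_mul_two_pow_theta_le hσ hk fun ρ hρ => (near ρ hρ).1,
    two_pow_le_extCard_mul hσ hk fun ρ hρ => (near ρ hρ).2⟩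

end

theorem stmt13_general (P : Set (ℕ → Bool)) (c : ℕ)
    (hhom : ∀ σ τ : List Bool, extn P σ → extn P τ → σ.length = τ.length →
      |(theta P σ : ℤ) - (theta P τ : ℤ)| ≤ c) :
    ∀ n k : ℕ, n ≤ k → ∀ σ : List Bool, σ ∈ level P n →
      levelCard P k ≤ 2 ^ (4 * c) * (levelCard (P ∩ cyl σ) k * levelCard P n) ∧
      levelCard (P ∩ cyl σ) k * levelCard P n ≤ 2 ^ (4 * c) * levelCard P k := by
  have hP : AHomogeneous P c := hhom
  rintro - k hnk σ ⟨rfl, hσ⟩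
  have hnil : extn P [] := extn_of_prefix List.nil_prefix hσ
  obtain ⟨ρ₀, hρ₀⟩ := extFinset_nonempty hσ hnk
  obtain ⟨hρ₀k, hρ₀, -⟩ := mem_extFinset.mp hρ₀
  obtain ⟨hk₁, hk₂⟩ := hP.extCard_mul_two_pow_theta_bounds hnil (Nat.zero_le k) hρ₀ hρ₀k
  obtain ⟨hσ₁, hσ₂⟩ := hP.extCard_mul_two_pow_theta_bounds hσ hnk hρ₀ hρ₀k
  obtain ⟨hn₁, hn₂⟩ := hP.extCard_mul_two_pow_theta_bounds hnil (Nat.zero_le _) hσ rfl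
  simp only [theta_nil, pow_zero, mul_one] at hk₁ hk₂ hn₁ hn₂
  rw [levelCard_inter_cyl hnk, levelCard_eq_extCard_nil, levelCard_eq_extCard_nil, pow_mul']
  have ht : (2 ^ c) ^ 3 ≤ (2 ^ c) ^ 4 := Nat.pow_le_pow_right (by positivity) (by norm_num)
  constructor
  · calc extCard P [] k
        ≤ 2 ^ c * (2 ^ c * (extCard P σ k * 2 ^ theta P σ)) := hk₁.trans (by gcongr)
      _ ≤ 2 ^ c * (2 ^ c * (extCard P σ k * (2 ^ c * extCard P [] σ.length))) := by gcongr
      _ = (2 ^ c) ^ 3 * (extCard P σ k * extCard P [] σ.length) := by ring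
      _ ≤ _ := by gcongr
  · calc extCard P σ k * extCard P [] σ.length
        ≤ 2 ^ c * (extCard P σ k * 2 ^ theta P σ) := by rw [mul_left_comm]; gcongr
      _ ≤ 2 ^ c * (2 ^ c * (2 ^ c * extCard P [] k)) :=
          Nat.mul_le_mul_left _ (hσ₁.trans (Nat.mul_le_mul_left _ hk₂))
      _ = (2 ^ c) ^ 3 * extCard P [] k := by ring
      _ ≤ _ := by gcongr

theorem stmt13 (P : Set (ℕ → Bool)) (hPne : P.Nonempty) (hPc : IsClosed P) (c : ℕ)
    (hhom : ∀ σ τ : List Bool, extn P σ → extn P τ → σ.length = τ.length →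
      |(theta P σ : ℤ) - (theta P τ : ℤ)| ≤ c) :
    ∀ n k : ℕ, n ≤ k → ∀ σ : List Bool, σ ∈ level P n →
      levelCard P k ≤ 2 ^ (4 * c) * (levelCard (P ∩ cyl σ) k * levelCard P n) ∧
      levelCard (P ∩ cyl σ) k * levelCard P n ≤ 2 ^ (4 * c) * levelCard P k :=
  stmt13_general P c hhom
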